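/- Let a, b ∈ ℝ and let x̂_1, x̂_2, ŷ_1, ŷ_2 be positive real numbers satisfying ŷ_1 − 2/ŷ_1 = b − 1/x̂_2 + 1/(x̂_2 + ŷ_2), ŷ_2 − 2/ŷ_2 = b − 1/x̂_1 + 1/(x̂_1 + ŷ_1), x̂_1 − 2/x̂_1 = a − 1/ŷ_2 + 1/(x̂_2 + ŷ_2), and x̂_2 − 2/x̂_2 = a − 1/ŷ_1 + 1/(x̂_1 + ŷ_1). Then x̂_1 = x̂_2 and ŷ_1 = ŷ_2. -/

import Mathlib

/-!
Subtracting the `x`-equations from the `y`-equations gives `f x₁ - f x₂ = f y₁ - f y₂` for the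
increasing function `f t = t - 1/t`, so `x₁ - x₂` and `y₁ - y₂` have the same sign. Adding them
gives `Φ x₁ y₁ = Φ x₂ y₂` for `Φ x y = x + y - 3/x - 3/y + 2/(x + y)`, which is strictly increasing
in each variable on the positive quadrant; hence neither difference can be nonzero.
-/

open Set

lemma strictMonoOn_sub_one_div : StrictMonoOn (fun t : ℝ => t - 1 / t) (Ioi 0) := by
  intro s hs t _ hst
  have : 1 / t < 1 / s := one_div_lt_one_div_of_lt hs hst
  simp only
  linarith

noncomputable def couplingPotential (x y : ℝ) : ℝ := x + y - 3 / x - 3 / y + 2 / (x + y)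

lemma couplingPotential_comm (x y : ℝ) : couplingPotential x y = couplingPotential y x := by
  unfold couplingPotential
  ring_nf

lemma couplingPotential_lt_left {x x' y : ℝ} (hx : 0 < x) (hxx' : x < x') (hy : 0 < y) :
    couplingPotential x y < couplingPotential x' y := by
  have hx' : 0 < x' := hx.trans hxx'
  have hdiff : couplingPotential x' y - couplingPotential x y
      = (x' - x) * (1 + 3 / (x * x') - 2 / ((x + y) * (x' + y))) := by
    unfold couplingPotential
    field_simp
    ring
  -- `(x + y)(x' + y) > x x'` makes the last term smaller than `2 / (x x') < 1 + 3 / (x x')`.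
  have hprod : x * x' < (x + y) * (x' + y) := by nlinarith
  have hfrac : 2 / ((x + y) * (x' + y)) < 2 / (x * x') := by gcongr
  have hcoef : 0 < 1 + 3 / (x * x') - 2 / ((x + y) * (x' + y)) := by
    have : 2 / (x * x') ≤ 3 / (x * x') := by gcongr; norm_num
    linarith
  nlinarith [mul_pos (sub_pos.2 hxx') hcoef]

lemma couplingPotential_lt {x₁ x₂ y₁ y₂ : ℝ} (hx₁ : 0 < x₁) (hy₁ : 0 < y₁)
    (hx : x₁ < x₂) (hy : y₁ < y₂) : couplingPotential x₁ y₁ < couplingPotential x₂ y₂ :=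
  calc couplingPotential x₁ y₁ < couplingPotential x₂ y₁ :=
        couplingPotential_lt_left hx₁ hx hy₁
    _ = couplingPotential y₁ x₂ := couplingPotential_comm _ _
    _ < couplingPotential y₂ x₂ := couplingPotential_lt_left hy₁ hy (hx₁.trans hx)
    _ = couplingPotential x₂ y₂ := couplingPotential_comm _ _

lemma couplingPotential_lt_of_sub_one_div_eq {x₁ x₂ y₁ y₂ : ℝ} (hx₁ : 0 < x₁) (hx₂ : 0 < x₂)
    (hy₁ : 0 < y₁) (hy₂ : 0 < y₂) (hx : x₁ < x₂)
    (hf : x₁ - 1 / x₁ - (x₂ - 1 / x₂) = y₁ - 1 / y₁ - (y₂ - 1 / y₂)) :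
    couplingPotential x₁ y₁ < couplingPotential x₂ y₂ := by
  have hfx : x₁ - 1 / x₁ < x₂ - 1 / x₂ := strictMonoOn_sub_one_div hx₁ hx₂ hx
  have hy : y₁ < y₂ := (strictMonoOn_sub_one_div.lt_iff_lt hy₁ hy₂).1 (by linarith)
  exact couplingPotential_lt hx₁ hy₁ hx hy

theorem coupled_system_symmetric_solution
    (a b : ℝ) (x₁ x₂ y₁ y₂ : ℝ)
    (hx₁ : 0 < x₁) (hx₂ : 0 < x₂) (hy₁ : 0 < y₁) (hy₂ : 0 < y₂)
    (h1 : y₁ - 2 / y₁ = b - 1 / x₂ + 1 / (x₂ + y₂))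
    (h2 : y₂ - 2 / y₂ = b - 1 / x₁ + 1 / (x₁ + y₁))
    (h3 : x₁ - 2 / x₁ = a - 1 / y₂ + 1 / (x₂ + y₂))
    (h4 : x₂ - 2 / x₂ = a - 1 / y₁ + 1 / (x₁ + y₁)) :
    x₁ = x₂ ∧ y₁ = y₂ := by
  have hf : x₁ - 1 / x₁ - (x₂ - 1 / x₂) = y₁ - 1 / y₁ - (y₂ - 1 / y₂) := by
    linear_combination h3 - h4 - h1 + h2
  have hΦ : couplingPotential x₁ y₁ = couplingPotential x₂ y₂ := by
    unfold couplingPotential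
    linear_combination h1 - h2 + h3 - h4
  have hx : x₁ = x₂ := by
    rcases lt_trichotomy x₁ x₂ with h | h | h
    · exact absurd hΦ (couplingPotential_lt_of_sub_one_div_eq hx₁ hx₂ hy₁ hy₂ h hf).ne
    · exact h
    · exact absurd hΦ (couplingPotential_lt_of_sub_one_div_eq hx₂ hx₁ hy₂ hy₁ h (by linarith)).ne'
  subst hx
  exact ⟨rfl, strictMonoOn_sub_one_div.injOn hy₁ hy₂ (show y₁ - 1 / y₁ = y₂ - 1 / y₂ by linarith)⟩
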